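/- arXiv:2511.16514 — 2 statements merged into one kernel-verified Lean document; each statement's English description precedes it below -/
import Mathlib

section
/- Let s_k(z) denote the sum of the k largest absolute values of coordinates of z ∈ ℝⁿ, and suppose |z|_{(k)} > 0. Define T_k = {i : |z_i| > |z|_{(k)}}, E_k = {i : |z_i| = |z|_{(k)}}, R_k = {i : |z_i| < |z|_{(k)}}. Then the subdifferential ∂s_k(z) = {v ∈ ℝⁿ : ‖v‖_∞ ≤ 1, v_i = sign(z_i) for i ∈ T_k, v_i ∈ ℝ₊·sign(z_i) for i ∈ E_k, v_i = 0 for i ∈ R_k, and Σ_{i∈E_k}|v_i| = k − |T_k|}. -/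
/-
For every threshold `m`, `sk n k w ≤ m * k + ∑ i, max (|w i| - m) 0`, with equality when
`#{i | m < |w i|} ≤ k ≤ #{i | m ≤ |w i|}`, i.e. when `m` is a `k`-th largest absolute value.
Hence `sk n k` is the support function of `B = {v : |v i| ≤ 1, ∑ |v i| ≤ k}`, and, being
positively homogeneous, its subdifferential at `z` is `{v ∈ B : ⟪v, z⟫ = sk n k z}`.
For `v ∈ B`, the slack `m * k + ∑ i, max (|z i| - m) 0 - ⟪v, z⟫` is a sum of nonnegative
coordinate terms plus `m * (k - ∑ |v i|)`; asking that all of them vanish gives exactly the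
sign pattern on `T`, `E`, `R` and the budget `∑_{i ∈ E} |v i| = k - |T|`.
-/

open scoped RealInnerProductSpace
noncomputable section

/-- `sk n k w` is the sum of the `k` largest absolute values of coordinates of `w`. -/
def sk (n k : ℕ) (w : EuclideanSpace ℝ (Fin n)) : ℝ :=
  sSup {t : ℝ | ∃ S : Finset (Fin n), S.card = k ∧ t = ∑ i ∈ S, |w i|}

/-- Convex subdifferential of a real-valued function. -/
def rsubdiff {X : Type*} [NormedAddCommGroup X] [InnerProductSpace ℝ X]
    (g : X → ℝ) (x : X) : Set X :=
  {v | ∀ y, g x + ⟪v, y - x⟫ ≤ g y}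

theorem sign_mul_self_eq_abs (x : ℝ) : Real.sign x * x = |x| := by
  rcases lt_trichotomy x 0 with hx | rfl | hx
  · simp [Real.sign_of_neg hx, abs_of_neg hx]
  · simp
  · simp [Real.sign_of_pos hx, abs_of_pos hx]

theorem abs_sign_of_ne_zero {x : ℝ} (hx : x ≠ 0) : |Real.sign x| = 1 := by
  rcases (Real.sign_apply_eq_of_ne_zero x hx) with h | h <;> simp [h]

theorem eq_sign_of_mul_eq_abs {a b : ℝ} (hb : b ≠ 0) (h : a * b = |b|) : a = Real.sign b :=
  mul_right_cancel₀ hb (h.trans (sign_mul_self_eq_abs b).symm)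

theorem exists_nonneg_mul_sign_iff {a b : ℝ} (hb : b ≠ 0) :
    (∃ c, 0 ≤ c ∧ a = c * Real.sign b) ↔ 0 ≤ a * b := by
  constructor
  · rintro ⟨c, hc, rfl⟩
    rw [mul_assoc, sign_mul_self_eq_abs]
    positivity
  · intro hab
    refine ⟨|a|, abs_nonneg a, mul_right_cancel₀ hb ?_⟩
    rw [mul_assoc, sign_mul_self_eq_abs, ← abs_mul, abs_of_nonneg hab]

theorem abs_sign_le_one (x : ℝ) : |Real.sign x| ≤ 1 := by
  rcases Real.sign_apply_eq x with h | h | h <;> simp [h]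

theorem mem_rsubdiff_iff_of_homogeneous {X : Type*} [NormedAddCommGroup X]
    [InnerProductSpace ℝ X] {g : X → ℝ} (hg : ∀ t : ℝ, 0 ≤ t → ∀ x, g (t • x) = t * g x)
    {x v : X} : v ∈ rsubdiff g x ↔ (∀ y, ⟪v, y⟫ ≤ g y) ∧ g x = ⟪v, x⟫ := by
  have hg0 : g 0 = 0 := by simpa using hg 0 le_rfl 0
  constructor
  · intro hv
    have hle : g x ≤ ⟪v, x⟫ := by simpa [hg0, inner_neg_right] using hv 0
    have hge : ⟪v, x⟫ ≤ g x := by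
      have h2 := hv ((2 : ℝ) • x)
      rw [hg 2 zero_le_two, show (2 : ℝ) • x - x = x by module] at h2
      linarith
    exact ⟨fun y => by simpa [inner_sub_right, hle.antisymm hge] using hv y,
      hle.antisymm hge⟩
  · rintro ⟨hsupp, hx⟩ y
    simpa [hx, inner_sub_right] using hsupp y

/-- Equal to `(|a * b| - a * b) + (1 - |a|) * max (|b| - m) 0 + |a| * max (m - |b|) 0`, a sum of
three nonnegative terms when `|a| ≤ 1`. -/
def thresholdGap (m a b : ℝ) : ℝ := max (|b| - m) 0 + m * |a| - a * b

theorem mul_le_abs_mul_abs (a b : ℝ) : a * b ≤ |a| * |b| := abs_mul a b ▸ le_abs_self _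

theorem thresholdGap_nonneg {m a b : ℝ} (ha : |a| ≤ 1) :
    0 ≤ thresholdGap m a b := by
  have := mul_le_abs_mul_abs a b
  unfold thresholdGap
  rcases le_total |b| m with hbm | hbm
  · rw [max_eq_right (by linarith)]
    nlinarith [abs_nonneg a]
  · rw [max_eq_left (by linarith)]
    nlinarith [abs_nonneg a]

theorem thresholdGap_eq_zero_iff {m a b : ℝ} (hm : 0 < m) (ha : |a| ≤ 1) :
    thresholdGap m a b = 0 ↔
      (m < |b| → a = Real.sign b) ∧ (|b| = m → ∃ c, 0 ≤ c ∧ a = c * Real.sign b) ∧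
        (|b| < m → a = 0) := by
  have hab := mul_le_abs_mul_abs a b
  unfold thresholdGap
  rcases lt_trichotomy |b| m with hbm | rfl | hbm
  · simp only [hbm, hbm.ne, hbm.not_gt, max_eq_right (sub_nonpos.2 hbm.le), false_imp_iff,
      forall_const, true_and]
    constructor
    · intro h
      have : |a| ≤ 0 := by nlinarith [abs_nonneg a]
      exact abs_nonpos_iff.1 this
    · rintro rfl
      simp
  · have hb : b ≠ 0 := abs_pos.1 hm
    simp only [lt_irrefl, false_imp_iff, sub_self, max_self, zero_add, true_imp_iff, true_and,
      and_true, exists_nonneg_mul_sign_iff hb]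
    rw [mul_comm, ← abs_mul, sub_eq_zero, abs_eq_self]
  · have hb : b ≠ 0 := abs_pos.1 (hm.trans hbm)
    simp only [hbm, hbm.ne', hbm.not_gt, max_eq_left (sub_nonneg.2 hbm.le), false_imp_iff,
      forall_const, and_true]
    constructor
    · intro h
      have ha1 : |a| = 1 := by nlinarith [abs_nonneg a]
      exact eq_sign_of_mul_eq_abs hb (by nlinarith)
    · rintro rfl
      rw [abs_sign_of_ne_zero hb, mul_comm, sign_mul_self_eq_abs]
      ring

theorem ncard_setOf_eq_card_filter {α : Type*} [Fintype α] (p : α → Prop) [DecidablePred p] :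
    {i | p i}.ncard = (Finset.univ.filter p).card := by
  rw [Set.ncard_eq_toFinset_card', Set.toFinset_ofPred]

section TopK

variable {n k : ℕ}

theorem inner_eq_sum_mul (v w : EuclideanSpace ℝ (Fin n)) : ⟪v, w⟫ = ∑ i, v i * w i := by
  simp [PiLp.inner_apply, mul_comm]

theorem finite_topKSums (w : EuclideanSpace ℝ (Fin n)) :
    {t : ℝ | ∃ S : Finset (Fin n), S.card = k ∧ t = ∑ i ∈ S, |w i|}.Finite :=
  (Set.finite_range fun S : Finset (Fin n) => ∑ i ∈ S, |w i|).subset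
    fun _ ⟨S, _, hS⟩ => ⟨S, hS.symm⟩

theorem nonempty_topKSums (hkn : k ≤ n) (w : EuclideanSpace ℝ (Fin n)) :
    {t : ℝ | ∃ S : Finset (Fin n), S.card = k ∧ t = ∑ i ∈ S, |w i|}.Nonempty := by
  obtain ⟨S, -, hS⟩ :=
    Finset.exists_subset_card_eq (s := (Finset.univ : Finset (Fin n))) (by simpa using hkn)
  exact ⟨_, S, hS, rfl⟩

theorem sum_abs_le_sk (w : EuclideanSpace ℝ (Fin n)) {S : Finset (Fin n)} (hS : S.card = k) :
    ∑ i ∈ S, |w i| ≤ sk n k w :=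
  le_csSup (finite_topKSums w).bddAbove ⟨S, hS, rfl⟩

theorem sk_le (hkn : k ≤ n) {w : EuclideanSpace ℝ (Fin n)} {t : ℝ}
    (ht : ∀ S : Finset (Fin n), S.card = k → ∑ i ∈ S, |w i| ≤ t) : sk n k w ≤ t :=
  csSup_le (nonempty_topKSums hkn w) (by rintro _ ⟨S, hS, rfl⟩; exact ht S hS)

theorem exists_sk_eq_sum (hkn : k ≤ n) (w : EuclideanSpace ℝ (Fin n)) :
    ∃ S : Finset (Fin n), S.card = k ∧ sk n k w = ∑ i ∈ S, |w i| :=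
  (nonempty_topKSums hkn w).csSup_mem (finite_topKSums w)

theorem sk_smul (hkn : k ≤ n) {t : ℝ} (ht : 0 ≤ t) (w : EuclideanSpace ℝ (Fin n)) :
    sk n k (t • w) = t * sk n k w := by
  have hsum (S : Finset (Fin n)) : ∑ i ∈ S, |(t • w) i| = t * ∑ i ∈ S, |w i| := by
    simp [Finset.mul_sum, abs_mul, abs_of_nonneg ht]
  apply le_antisymm
  · exact sk_le hkn fun S hS => hsum S ▸ mul_le_mul_of_nonneg_left (sum_abs_le_sk w hS) ht
  · obtain ⟨S, hS, hskS⟩ := exists_sk_eq_sum hkn w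
    rw [hskS, ← hsum]
    exact sum_abs_le_sk _ hS

theorem sk_le_threshold (hkn : k ≤ n) (m : ℝ) (w : EuclideanSpace ℝ (Fin n)) :
    sk n k w ≤ m * k + ∑ i, max (|w i| - m) 0 := by
  refine sk_le hkn fun S hS => ?_
  calc ∑ i ∈ S, |w i| ≤ ∑ i ∈ S, (m + max (|w i| - m) 0) :=
        Finset.sum_le_sum fun i _ => by linarith [le_max_left (|w i| - m) (0 : ℝ)]
    _ ≤ m * k + ∑ i, max (|w i| - m) 0 := by
        rw [Finset.sum_add_distrib, Finset.sum_const, hS, nsmul_eq_mul, mul_comm]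
        exact add_le_add_right
          (Finset.sum_le_univ_sum_of_nonneg fun i => le_max_right (|w i| - m) (0 : ℝ)) _

theorem sk_eq_threshold (hkn : k ≤ n) {m : ℝ} {w : EuclideanSpace ℝ (Fin n)}
    (h₁ : {i | m < |w i|}.ncard ≤ k) (h₂ : k ≤ {i | m ≤ |w i|}.ncard) :
    sk n k w = m * k + ∑ i, max (|w i| - m) 0 := by
  classical
  rw [ncard_setOf_eq_card_filter] at h₁ h₂
  obtain ⟨S, hTS, hSM, hS⟩ := Finset.exists_subsuperset_card_eq
    (fun i => by simpa using le_of_lt) h₁ h₂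
  refine (sk_le_threshold hkn m w).antisymm (le_trans (le_of_eq ?_) (sum_abs_le_sk w hS))
  calc m * k + ∑ i, max (|w i| - m) 0 = ∑ i ∈ S, (m + max (|w i| - m) 0) := by
        rw [Finset.sum_add_distrib, Finset.sum_const, hS, nsmul_eq_mul, mul_comm,
          ← Finset.sum_subset (Finset.subset_univ S)]
        intro i _ hiS
        exact max_eq_right (by simpa using mt (@hTS i) (by simpa using hiS))
    _ = ∑ i ∈ S, |w i| := Finset.sum_congr rfl fun i hi => by
        have : m ≤ |w i| := by simpa using hSM hi
        rw [max_eq_left (by linarith)]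
        ring

theorem exists_threshold (hk : 0 < k) (hkn : k ≤ n) (w : EuclideanSpace ℝ (Fin n)) :
    ∃ m, 0 ≤ m ∧ {i | m < |w i|}.ncard ≤ k ∧ k ≤ {i | m ≤ |w i|}.ncard := by
  classical
  obtain ⟨S, hS, hskS⟩ := exists_sk_eq_sum hkn w
  obtain ⟨j, hjS, hjmin⟩ := S.exists_min_image (fun j => |w j|) (Finset.card_pos.1 (hS ▸ hk))
  have hsub : {i | |w j| < |w i|} ⊆ S := by
    intro i hi
    by_contra hiS
    have hiS' : i ∉ S.erase j := mt Finset.mem_of_mem_erase hiS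
    have hcard : (insert i (S.erase j)).card = k := by
      rw [Finset.card_insert_of_notMem hiS', Finset.card_erase_of_mem hjS]
      omega
    -- exchanging `j` for `i` would beat the optimal set `S`
    have := sum_abs_le_sk w hcard
    rw [Finset.sum_insert hiS', Finset.sum_erase_eq_sub hjS, ← hskS] at this
    linarith [show |w j| < |w i| from hi]
  refine ⟨|w j|, abs_nonneg _, ?_, ?_⟩
  · simpa [hS] using Set.ncard_le_ncard hsub
  · simpa [hS] using
      Set.ncard_le_ncard (s := S) (t := {i | |w j| ≤ |w i|}) fun i hi => hjmin i hi

theorem threshold_sub_inner (m : ℝ) (v w : EuclideanSpace ℝ (Fin n)) :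
    m * k + ∑ i, max (|w i| - m) 0 - ⟪v, w⟫ =
      ∑ i, thresholdGap m (v i) (w i) + m * (k - ∑ i, |v i|) := by
  simp only [thresholdGap, inner_eq_sum_mul, Finset.sum_sub_distrib, Finset.sum_add_distrib,
    ← Finset.mul_sum]
  ring

theorem inner_le_threshold {m : ℝ} (hm : 0 ≤ m) {v : EuclideanSpace ℝ (Fin n)}
    (hv₁ : ∀ i, |v i| ≤ 1) (hvk : ∑ i, |v i| ≤ k) (w : EuclideanSpace ℝ (Fin n)) :
    ⟪v, w⟫ ≤ m * k + ∑ i, max (|w i| - m) 0 := by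
  rw [← sub_nonneg, threshold_sub_inner]
  exact add_nonneg (Finset.sum_nonneg fun i _ => thresholdGap_nonneg (hv₁ i))
    (mul_nonneg hm (sub_nonneg.2 hvk))

theorem threshold_eq_inner_iff {m : ℝ} (hm : 0 < m) {v : EuclideanSpace ℝ (Fin n)}
    (hv₁ : ∀ i, |v i| ≤ 1) (hvk : ∑ i, |v i| ≤ k) (w : EuclideanSpace ℝ (Fin n)) :
    m * k + ∑ i, max (|w i| - m) 0 = ⟪v, w⟫ ↔
      (∀ i, thresholdGap m (v i) (w i) = 0) ∧ ∑ i, |v i| = k := by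
  rw [← sub_eq_zero, threshold_sub_inner,
    add_eq_zero_iff_of_nonneg (Finset.sum_nonneg fun i _ => thresholdGap_nonneg (hv₁ i))
      (mul_nonneg hm.le (sub_nonneg.2 hvk)),
    Finset.sum_eq_zero_iff_of_nonneg fun i _ => thresholdGap_nonneg (hv₁ i)]
  simp [hm.ne', sub_eq_zero, eq_comm (a := (k : ℝ))]

theorem forall_inner_le_sk_iff (hk : 0 < k) (hkn : k ≤ n) {v : EuclideanSpace ℝ (Fin n)} :
    (∀ y, ⟪v, y⟫ ≤ sk n k y) ↔ (∀ i, |v i| ≤ 1) ∧ ∑ i, |v i| ≤ k := by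
  constructor
  · intro h
    constructor
    · intro i
      calc |v i| = ⟪v, EuclideanSpace.single i (Real.sign (v i))⟫ := by
            simp [EuclideanSpace.inner_single_right, sign_mul_self_eq_abs]
        _ ≤ 0 * k + ∑ j, max (|EuclideanSpace.single i (Real.sign (v i)) j| - 0) 0 :=
            (h _).trans (sk_le_threshold hkn 0 _)
        _ ≤ 1 := by simpa [PiLp.single_apply, apply_ite] using abs_sign_le_one (v i)
    · calc ∑ i, |v i| = ⟪v, WithLp.toLp 2 fun j => Real.sign (v j)⟫ := by
            rw [inner_eq_sum_mul]
            exact Finset.sum_congr rfl fun j _ => by rw [mul_comm, sign_mul_self_eq_abs]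
        _ ≤ 1 * k + ∑ j, max (|Real.sign (v j)| - 1) 0 :=
            (h _).trans (sk_le_threshold hkn 1 _)
        _ = k := by simp [abs_sign_le_one]
  · rintro ⟨hv₁, hvk⟩ y
    obtain ⟨m, hm, h₁, h₂⟩ := exists_threshold hk hkn y
    rw [sk_eq_threshold hkn h₁ h₂]
    exact inner_le_threshold hm hv₁ hvk y

theorem sum_abs_eq_ncard_add_finsum {m : ℝ} (hm : 0 ≤ m) {v z : EuclideanSpace ℝ (Fin n)}
    (hT : ∀ i, m < |z i| → v i = Real.sign (z i)) (hR : ∀ i, |z i| < m → v i = 0) :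
    ∑ i, |v i| = {i | m < |z i|}.ncard + ∑ᶠ i ∈ {i | |z i| = m}, |v i| := by
  classical
  have hcoord (i : Fin n) :
      |v i| = (if m < |z i| then 1 else 0) + (if |z i| = m then |v i| else 0) := by
    rcases lt_trichotomy m |z i| with h | h | h
    · simp [h, h.ne', hT i h, abs_sign_of_ne_zero (abs_pos.1 (hm.trans_lt h))]
    · simp [h]
    · simp [h.ne, h.not_gt, hR i h]
  rw [Finset.sum_congr rfl fun i _ => hcoord i, Finset.sum_add_distrib, Finset.sum_boole,
    ncard_setOf_eq_card_filter, ← Finset.sum_filter, finsum_mem_eq_toFinset_sum]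
  simp

end TopK

/-- subdifferential of `s_k` at `z` when the `k`-th largest absolute
value `m = |z|_(k)` is positive.  With `T = {i : |z i| > m}`, `E = {i : |z i| = m}`,
`R = {i : |z i| < m}`, one has
`∂s_k(z) = {v : ‖v‖∞ ≤ 1, v_i = sign z_i on T, v_i ∈ ℝ₊·sign z_i on E, v_i = 0 on R,
Σ_{i∈E}|v_i| = k − |T|}`. -/
theorem stmt10 (n k : ℕ) (hk1 : 1 ≤ k) (hkn : k ≤ n)
    (z : EuclideanSpace ℝ (Fin n)) (m : ℝ) (hm : 0 < m)
    (hcard₁ : {i : Fin n | m < |z i|}.ncard < k)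
    (hcard₂ : k ≤ {i : Fin n | m ≤ |z i|}.ncard) :
    rsubdiff (sk n k) z =
      {v : EuclideanSpace ℝ (Fin n) |
        (∀ i, |v i| ≤ 1) ∧
        (∀ i, m < |z i| → v i = Real.sign (z i)) ∧
        (∀ i, |z i| = m → ∃ c : ℝ, 0 ≤ c ∧ v i = c * Real.sign (z i)) ∧
        (∀ i, |z i| < m → v i = 0) ∧
        (∑ᶠ i ∈ {i : Fin n | |z i| = m}, |v i|)
          = (k : ℝ) - ({i : Fin n | m < |z i|}.ncard : ℝ)} := by
  ext v
  rw [mem_rsubdiff_iff_of_homogeneous fun t ht => sk_smul hkn ht, forall_inner_le_sk_iff hk1 hkn,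
    sk_eq_threshold hkn hcard₁.le hcard₂, Set.mem_ofPred_eq]
  constructor
  · rintro ⟨⟨hv₁, hvk⟩, hvz⟩
    obtain ⟨hgap, hsum⟩ := (threshold_eq_inner_iff hm hv₁ hvk z).1 hvz
    have hcoord i := (thresholdGap_eq_zero_iff hm (hv₁ i)).1 (hgap i)
    refine ⟨hv₁, fun i => (hcoord i).1, fun i => (hcoord i).2.1, fun i => (hcoord i).2.2, ?_⟩
    rw [← hsum, sum_abs_eq_ncard_add_finsum hm.le (fun i => (hcoord i).1) fun i => (hcoord i).2.2]
    ring
  · rintro ⟨hv₁, hT, hE, hR, hE_sum⟩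
    have hsum : ∑ i, |v i| = k := by
      rw [sum_abs_eq_ncard_add_finsum hm.le hT hR, hE_sum]
      ring
    exact ⟨⟨hv₁, hsum.le⟩, (threshold_eq_inner_iff hm hv₁ hsum.le z).2
      ⟨fun i => (thresholdGap_eq_zero_iff hm (hv₁ i)).2 ⟨hT i, hE i, hR i⟩, hsum⟩⟩
end
end

section
/- Let D be the (n−1)×n difference matrix and g(x) = ‖Dx‖₁. For z ∈ dom g*, the parallel subspace of ∂g*(z) equals {x ∈ ℝⁿ : x_i = x_{i+1} whenever |z₁ + ⋯ + z_i| < 1, for i = 1,…,n−1}. -/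
/-!
Since `g` is positively homogeneous, `g*` is the indicator of `K = {w | ⟪w, ·⟫ ≤ g}`, so
`∂g*(z)` is the normal cone `N_K(z) = {a | g a ≤ ⟪a, z⟫}`: the supremum of `⟪a, ·⟫` over `K` is
`g a`, attained at `Dᵀ (sign (D a))`. For `z ∈ K` testing against constant and step vectors gives
`∑ zⱼ = 0` and `|yᵢ| ≤ 1` for the partial sums `yᵢ = z₀ + ⋯ + zᵢ`, and Abel summation gives
`⟪a, z⟫ = ∑ (D a)ᵢ yᵢ`. Hence `a ∈ N_K(z)` iff `(D a)ᵢ yᵢ = |(D a)ᵢ|` for all `i`. This forces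
`(D a)ᵢ = 0` where `|yᵢ| < 1`; conversely a vector `x` with that property is `a - b` with
`a, b ∈ N_K(z)`, taking `D a = |D x| y` and `b = a - x`.
-/

open scoped RealInnerProductSpace
noncomputable section

/-- Legendre–Fenchel conjugate of an extended-real-valued function. -/
def fenchel {X : Type*} [NormedAddCommGroup X] [InnerProductSpace ℝ X]
    (g : X → EReal) (v : X) : EReal :=
  ⨆ x : X, ((⟪v, x⟫ : ℝ) : EReal) - g x

/-- Convex subdifferential of an extended-real-valued function. -/
def esubdiff {X : Type*} [NormedAddCommGroup X] [InnerProductSpace ℝ X]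
    (g : X → EReal) (x : X) : Set X :=
  {v | ∀ y, g x + ((⟪v, y - x⟫ : ℝ) : EReal) ≤ g y}

/-- The `(n-1) × n` difference matrix `D` (here with `n = m + 1`). -/
def diffMatrix (m : ℕ) : Matrix (Fin m) (Fin (m + 1)) ℝ :=
  fun i j => if j = i.castSucc then 1 else if j = i.succ then -1 else 0

section ConvexDuality

variable {X : Type*} [NormedAddCommGroup X] [InnerProductSpace ℝ X]

def linearMinorants (g : X → ℝ) : Set X :=
  {w | ∀ x, ⟪w, x⟫ ≤ g x}

def normalCone (K : Set X) (z : X) : Set X :=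
  {a | ∀ w ∈ K, ⟪a, w⟫ ≤ ⟪a, z⟫}

lemma fenchel_eq_zero_of_mem_linearMinorants {g : X → ℝ} (hg0 : g 0 = 0) {v : X}
    (hv : v ∈ linearMinorants g) : fenchel (fun x => (g x : EReal)) v = 0 := by
  unfold fenchel
  refine le_antisymm (iSup_le fun x => ?_) ?_
  · exact EReal.coe_sub _ _ ▸ EReal.coe_nonpos.2 (sub_nonpos.2 (hv x))
  · simpa [hg0] using le_iSup (fun x => ((⟪v, x⟫ : ℝ) : EReal) - g x) 0

lemma fenchel_eq_top_of_notMem_linearMinorants {g : X → ℝ}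
    (hg : ∀ t : ℝ, 0 ≤ t → ∀ x, g (t • x) = t * g x) {v : X}
    (hv : v ∉ linearMinorants g) : fenchel (fun x => (g x : EReal)) v = ⊤ := by
  obtain ⟨x, hx⟩ : ∃ x, g x < ⟪v, x⟫ := by simpa [linearMinorants] using hv
  refine EReal.eq_top_iff_forall_lt _ |>.2 fun r => ?_
  obtain ⟨t, ht0, hrt⟩ : ∃ t : ℝ, 0 ≤ t ∧ r < t * (⟪v, x⟫ - g x) := by
    obtain ⟨n, hn⟩ := exists_nat_gt (r / (⟪v, x⟫ - g x))
    exact ⟨n, n.cast_nonneg, (div_lt_iff₀ (sub_pos.2 hx)).1 hn⟩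
  calc (r : EReal) < ((t * (⟪v, x⟫ - g x) : ℝ) : EReal) := by exact_mod_cast hrt
    _ = ((⟪v, t • x⟫ : ℝ) : EReal) - g (t • x) := by
        rw [real_inner_smul_right, hg t ht0, mul_sub]; rfl
    _ ≤ _ := le_iSup (fun y => ((⟪v, y⟫ : ℝ) : EReal) - g y) (t • x)

lemma esubdiff_eq_normalCone {f : X → EReal} {K : Set X} (hK : ∀ v ∈ K, f v = 0)
    (hKc : ∀ v ∉ K, f v = ⊤) {z : X} (hz : z ∈ K) : esubdiff f z = normalCone K z := by
  ext a
  simp only [esubdiff, normalCone, Set.mem_ofPred_eq, hK z hz, zero_add, inner_sub_right]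
  refine ⟨fun ha w hw => ?_, fun ha w => ?_⟩
  · have := ha w
    rw [hK w hw] at this
    exact sub_nonpos.1 (by exact_mod_cast this)
  · by_cases hw : w ∈ K
    · rw [hK w hw]
      exact_mod_cast sub_nonpos.2 (ha w hw)
    · rw [hKc w hw]
      exact le_top

lemma mem_linearMinorants_of_fenchel_ne_top {g : X → ℝ}
    (hg : ∀ t : ℝ, 0 ≤ t → ∀ x, g (t • x) = t * g x) {z : X}
    (hz : fenchel (fun x => (g x : EReal)) z ≠ ⊤) : z ∈ linearMinorants g :=
  not_not.1 (mt (fenchel_eq_top_of_notMem_linearMinorants hg) hz)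

lemma esubdiff_fenchel_eq_normalCone {g : X → ℝ}
    (hg : ∀ t : ℝ, 0 ≤ t → ∀ x, g (t • x) = t * g x) {z : X} (hz : z ∈ linearMinorants g) :
    esubdiff (fenchel (fun x => (g x : EReal))) z = normalCone (linearMinorants g) z :=
  esubdiff_eq_normalCone
    (fun _ => fenchel_eq_zero_of_mem_linearMinorants (by simpa using hg 0 le_rfl 0))
    (fun _ => fenchel_eq_top_of_notMem_linearMinorants hg) hz

lemma mem_normalCone_linearMinorants_iff {g : X → ℝ}
    (hg : ∀ a, ∃ w ∈ linearMinorants g, ⟪w, a⟫ = g a) (z a : X) :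
    a ∈ normalCone (linearMinorants g) z ↔ g a ≤ ⟪a, z⟫ := by
  refine ⟨fun ha => ?_, fun ha w hw => real_inner_comm a w ▸ (hw a).trans ha⟩
  obtain ⟨w, hw, hwa⟩ := hg a
  exact hwa ▸ real_inner_comm a w ▸ ha w hw

end ConvexDuality

section L1

open Matrix

variable {ι κ : Type*} [Fintype ι] [Fintype κ]

def l1NormMulVec (A : Matrix ι κ ℝ) (x : EuclideanSpace ℝ κ) : ℝ :=
  ∑ i, |(A *ᵥ WithLp.ofLp x) i|

lemma real_inner_eq_dotProduct (x y : EuclideanSpace ℝ κ) :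
    ⟪x, y⟫ = WithLp.ofLp x ⬝ᵥ WithLp.ofLp y := by
  rw [EuclideanSpace.inner_eq_star_dotProduct, star_trivial, dotProduct_comm]

lemma l1NormMulVec_smul (A : Matrix ι κ ℝ) {t : ℝ} (ht : 0 ≤ t) (x : EuclideanSpace ℝ κ) :
    l1NormMulVec A (t • x) = t * l1NormMulVec A x := by
  simp [l1NormMulVec, mulVec_smul, abs_mul, abs_of_nonneg ht, Finset.mul_sum]

lemma toLp_vecMul_mem_linearMinorants (A : Matrix ι κ ℝ) {u : ι → ℝ} (hu : ∀ i, |u i| ≤ 1) :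
    WithLp.toLp 2 (u ᵥ* A) ∈ linearMinorants (l1NormMulVec A) := by
  intro x
  rw [real_inner_eq_dotProduct, WithLp.ofLp_toLp, ← dotProduct_mulVec, l1NormMulVec]
  refine Finset.sum_le_sum fun i _ => ?_
  calc u i * (A *ᵥ WithLp.ofLp x) i ≤ |u i| * |(A *ᵥ WithLp.ofLp x) i| := by
        rw [← abs_mul]; exact le_abs_self _
    _ ≤ |(A *ᵥ WithLp.ofLp x) i| := mul_le_of_le_one_left (abs_nonneg _) (hu i)

lemma exists_mem_linearMinorants_inner_eq_l1NormMulVec (A : Matrix ι κ ℝ)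
    (a : EuclideanSpace ℝ κ) :
    ∃ w ∈ linearMinorants (l1NormMulVec A), ⟪w, a⟫ = l1NormMulVec A a := by
  let u : ι → ℝ := fun i => SignType.sign ((A *ᵥ WithLp.ofLp a) i)
  refine ⟨WithLp.toLp 2 (u ᵥ* A), toLp_vecMul_mem_linearMinorants A fun i => ?_, ?_⟩
  · dsimp only [u]
    rcases SignType.sign ((A *ᵥ WithLp.ofLp a) i) with _ | _ | _ <;> norm_num
  · rw [real_inner_eq_dotProduct, WithLp.ofLp_toLp, ← dotProduct_mulVec]
    simp [dotProduct, u, l1NormMulVec]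

lemma abs_inner_le_l1NormMulVec {A : Matrix ι κ ℝ}
    {w : EuclideanSpace ℝ κ} (hw : w ∈ linearMinorants (l1NormMulVec A))
    (x : EuclideanSpace ℝ κ) : |⟪w, x⟫| ≤ l1NormMulVec A x := by
  have hneg : -⟪w, x⟫ ≤ l1NormMulVec A x := by
    simpa [l1NormMulVec, mulVec_neg] using hw (-x)
  exact abs_le.2 ⟨by linarith, hw x⟩

end L1

lemma eq_zero_of_mul_eq_abs {d y : ℝ} (hy : |y| < 1) (h : d * y = |d|) : d = 0 := by
  have : |d| * (1 - |y|) ≤ 0 := by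
    nlinarith [abs_mul d y, le_abs_self (d * y)]
  exact abs_nonpos_iff.1 <| nonpos_of_mul_nonpos_left this (sub_pos.2 hy)

lemma mul_eq_abs_of_abs_eq_one {t y : ℝ} (hy : |y| = 1) (ht : 0 ≤ t * y) : t * y = |t| := by
  rw [← abs_of_nonneg ht, abs_mul, hy, mul_one]

lemma Submodule.span_image_sub_eq {R E : Type*} [Ring R] [AddCommGroup E] [Module R E]
    {C : Set E} {L : Submodule R E} {x₀ : E} (hx₀ : x₀ ∈ C)
    (hsub : ∀ a ∈ C, ∀ b ∈ C, a - b ∈ L) (hL : ∀ x ∈ L, ∃ a ∈ C, ∃ b ∈ C, a - b = x) :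
    Submodule.span R ((· - x₀) '' C) = L := by
  refine le_antisymm (Submodule.span_le.2 ?_) fun x hx => ?_
  · rintro _ ⟨a, ha, rfl⟩
    exact hsub a ha x₀ hx₀
  · obtain ⟨a, ha, b, hb, rfl⟩ := hL x hx
    rw [← sub_sub_sub_cancel_right a b x₀]
    exact sub_mem (Submodule.subset_span ⟨a, ha, rfl⟩) (Submodule.subset_span ⟨b, hb, rfl⟩)

section DiffMatrix

open Matrix

variable {m : ℕ}

lemma diffMatrix_mulVec_apply (x : Fin (m + 1) → ℝ) (i : Fin m) :
    (diffMatrix m *ᵥ x) i = x i.castSucc - x i.succ := by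
  have hrow : diffMatrix m i = Pi.single i.castSucc 1 - Pi.single i.succ 1 := by
    funext j
    have : i.castSucc ≠ i.succ := Fin.castSucc_lt_succ.ne
    by_cases h₁ : j = i.castSucc <;> by_cases h₂ : j = i.succ <;>
      simp_all [diffMatrix]
  rw [mulVec, hrow, sub_dotProduct, single_one_dotProduct, single_one_dotProduct]

def cumSum (z : Fin (m + 1) → ℝ) (i : Fin m) : ℝ :=
  ∑ j ∈ Finset.univ.filter (fun j : Fin (m + 1) => (j : ℕ) ≤ (i : ℕ)), z j

lemma sum_filter_le_sub_succ (a : Fin (m + 1) → ℝ) (j : Fin (m + 1)) :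
    ∑ i ∈ Finset.univ.filter (fun i : Fin m => (j : ℕ) ≤ (i : ℕ)), (a i.castSucc - a i.succ) =
      a j - a (Fin.last m) := by
  -- `F` freezes `a` at `a j` below `j`, so the filtered sum becomes a full telescoping sum.
  let F : ℕ → ℝ := fun k => a ⟨min (max k j) m, by omega⟩
  have hterm : ∀ i : Fin m, (if (j : ℕ) ≤ i then a i.castSucc - a i.succ else 0) =
      F i - F (i + 1) := by
    intro i
    split_ifs with h
    · congr 2 <;> ext <;> simp only [Fin.val_castSucc, Fin.val_succ] <;> omega
    · rw [eq_comm, sub_eq_zero]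
      exact congrArg a (Fin.ext (by simp only; omega))
  rw [Finset.sum_filter, Finset.sum_congr rfl fun i _ => hterm i,
    Fin.sum_univ_eq_sum_range (fun k => F k - F (k + 1)), Finset.sum_range_sub']
  show a _ - a _ = _
  congr 2 <;> ext <;> simp only [Fin.val_last] <;> omega

lemma dotProduct_eq_diffMatrix_mulVec_dotProduct_cumSum {z : Fin (m + 1) → ℝ}
    (hz : ∑ j, z j = 0) (a : Fin (m + 1) → ℝ) :
    a ⬝ᵥ z = (diffMatrix m *ᵥ a) ⬝ᵥ cumSum z := by
  simp only [dotProduct, cumSum, diffMatrix_mulVec_apply, Finset.mul_sum, Finset.sum_filter]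
  rw [Finset.sum_comm]
  simp_rw [mul_ite, mul_zero, ← Finset.sum_filter, ← Finset.sum_mul, sum_filter_le_sub_succ,
    sub_mul, Finset.sum_sub_distrib, ← Finset.mul_sum, hz, mul_zero, sub_zero]

lemma sum_eq_zero_of_mem_linearMinorants {z : EuclideanSpace ℝ (Fin (m + 1))}
    (hz : z ∈ linearMinorants (l1NormMulVec (diffMatrix m))) : ∑ j, z j = 0 := by
  have h := abs_inner_le_l1NormMulVec hz (WithLp.toLp 2 fun _ => 1)
  simpa [real_inner_eq_dotProduct, l1NormMulVec, diffMatrix_mulVec_apply, dotProduct] using h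

lemma abs_cumSum_le_one {z : EuclideanSpace ℝ (Fin (m + 1))}
    (hz : z ∈ linearMinorants (l1NormMulVec (diffMatrix m))) (i : Fin m) :
    |cumSum z.ofLp i| ≤ 1 := by
  have h := abs_inner_le_l1NormMulVec hz
    (WithLp.toLp 2 fun j : Fin (m + 1) => if (j : ℕ) ≤ i then 1 else 0)
  simp only [real_inner_eq_dotProduct, dotProduct, mul_ite, mul_one, mul_zero, l1NormMulVec,
    diffMatrix_mulVec_apply, Fin.val_castSucc, Fin.val_fin_le, Fin.val_succ, Order.add_one_le_iff,
    Fin.val_fin_lt] at h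
  have hterm : ∀ k : Fin m,
      |(if k ≤ i then (1 : ℝ) else 0) - if k < i then 1 else 0| = if k = i then 1 else 0 := by
    intro k
    rcases lt_trichotomy k i with hk | rfl | hk
    · simp [hk, hk.le, hk.ne]
    · simp
    · simp [hk.not_gt, hk.not_ge, hk.ne']
  rwa [Finset.sum_congr rfl fun k _ => hterm k, Finset.sum_ite_eq', if_pos (Finset.mem_univ _),
    ← Finset.sum_filter] at h

lemma exists_diffMatrix_mulVec_eq (d : Fin m → ℝ) :
    ∃ a : EuclideanSpace ℝ (Fin (m + 1)), diffMatrix m *ᵥ a.ofLp = d :=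
  ⟨WithLp.toLp 2 (-Fin.partialSum d), funext fun i => by
    simp [diffMatrix_mulVec_apply, Fin.partialSum_succ]⟩

lemma mem_normalCone_iff_forall_mul_cumSum_eq_abs {z : EuclideanSpace ℝ (Fin (m + 1))}
    (hz : z ∈ linearMinorants (l1NormMulVec (diffMatrix m))) (a : EuclideanSpace ℝ (Fin (m + 1))) :
    a ∈ normalCone (linearMinorants (l1NormMulVec (diffMatrix m))) z ↔
      ∀ i, (diffMatrix m *ᵥ a.ofLp) i * cumSum z.ofLp i = |(diffMatrix m *ᵥ a.ofLp) i| := by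
  have hle : ∀ i ∈ Finset.univ,
      (diffMatrix m *ᵥ a.ofLp) i * cumSum z.ofLp i ≤ |(diffMatrix m *ᵥ a.ofLp) i| :=
    fun i _ => (le_abs_self _).trans <| (abs_mul _ _).trans_le <|
      mul_le_of_le_one_right (abs_nonneg _) (abs_cumSum_le_one hz i)
  rw [mem_normalCone_linearMinorants_iff (exists_mem_linearMinorants_inner_eq_l1NormMulVec _),
    real_inner_eq_dotProduct,
    dotProduct_eq_diffMatrix_mulVec_dotProduct_cumSum (sum_eq_zero_of_mem_linearMinorants hz),
    l1NormMulVec, dotProduct]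
  refine ⟨fun h i => ?_, fun h => (Finset.sum_congr rfl fun i _ => h i).ge⟩
  exact (Finset.sum_eq_sum_iff_of_le hle).1 (le_antisymm (Finset.sum_le_sum hle) h) i
    (Finset.mem_univ i)

def flatSubmodule (z : EuclideanSpace ℝ (Fin (m + 1))) :
    Submodule ℝ (EuclideanSpace ℝ (Fin (m + 1))) where
  carrier := {x | ∀ i : Fin m, |cumSum z.ofLp i| < 1 → x i.castSucc = x i.succ}
  add_mem' hx hy i hi := by simp [hx i hi, hy i hi]
  zero_mem' _ _ := rfl
  smul_mem' c x hx i hi := by simp [hx i hi]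

lemma mem_flatSubmodule_iff {z x : EuclideanSpace ℝ (Fin (m + 1))} :
    x ∈ flatSubmodule z ↔ ∀ i, |cumSum z.ofLp i| < 1 → (diffMatrix m *ᵥ x.ofLp) i = 0 := by
  simp only [diffMatrix_mulVec_apply, sub_eq_zero]
  rfl

variable {z : EuclideanSpace ℝ (Fin (m + 1))}

lemma sub_mem_flatSubmodule (hz : z ∈ linearMinorants (l1NormMulVec (diffMatrix m)))
    {a b : EuclideanSpace ℝ (Fin (m + 1))}
    (ha : a ∈ normalCone (linearMinorants (l1NormMulVec (diffMatrix m))) z)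
    (hb : b ∈ normalCone (linearMinorants (l1NormMulVec (diffMatrix m))) z) :
    a - b ∈ flatSubmodule z := by
  rw [mem_normalCone_iff_forall_mul_cumSum_eq_abs hz] at ha hb
  refine mem_flatSubmodule_iff.2 fun i hi => ?_
  rw [WithLp.ofLp_sub, mulVec_sub, Pi.sub_apply, eq_zero_of_mul_eq_abs hi (ha i),
    eq_zero_of_mul_eq_abs hi (hb i), sub_zero]

lemma exists_sub_eq_of_mem_flatSubmodule
    (hz : z ∈ linearMinorants (l1NormMulVec (diffMatrix m)))
    {x : EuclideanSpace ℝ (Fin (m + 1))} (hx : x ∈ flatSubmodule z) :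
    ∃ a ∈ normalCone (linearMinorants (l1NormMulVec (diffMatrix m))) z,
      ∃ b ∈ normalCone (linearMinorants (l1NormMulVec (diffMatrix m))) z, a - b = x := by
  set d := diffMatrix m *ᵥ x.ofLp
  set y := cumSum z.ofLp
  -- `a` has jumps `|dᵢ| yᵢ` and `b = a - x` has jumps `|dᵢ| yᵢ - dᵢ`; both have the sign of `yᵢ`.
  have key : ∀ i, |d i| * y i * y i = |(|d i| * y i)| ∧
      (|d i| * y i - d i) * y i = |(|d i| * y i - d i)| := by
    intro i
    rcases (abs_cumSum_le_one hz i).lt_or_eq with hlt | heq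
    · simp [show d i = 0 from mem_flatSubmodule_iff.1 hx i hlt]
    · have hyy : y i * y i = 1 := by rw [← abs_mul_abs_self, heq, one_mul]
      refine ⟨mul_eq_abs_of_abs_eq_one heq ?_, mul_eq_abs_of_abs_eq_one heq ?_⟩
      · rw [mul_assoc, hyy, mul_one]
        exact abs_nonneg _
      · have hdy : d i * y i ≤ |d i| := (le_abs_self _).trans (by rw [abs_mul, heq, mul_one])
        rw [sub_mul, mul_assoc, hyy, mul_one]
        linarith
  obtain ⟨a, ha⟩ := exists_diffMatrix_mulVec_eq fun i => |d i| * y i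
  refine ⟨a, ?_, a - x, ?_, sub_sub_cancel a x⟩ <;>
    rw [mem_normalCone_iff_forall_mul_cumSum_eq_abs hz]
  · simpa only [ha] using fun i => (key i).1
  · simpa only [WithLp.ofLp_sub, mulVec_sub, ha, Pi.sub_apply] using fun i => (key i).2

end DiffMatrix

/-- for the 1D total variation `g(x) = ‖Dx‖₁` and `z ∈ dom g*`,
the parallel subspace of `∂g*(z)` equals
`{x : x_i = x_{i+1} whenever |z₁ + ⋯ + z_i| < 1, i = 1, …, n-1}`. -/
theorem stmt14 (m : ℕ)
    (g : EuclideanSpace ℝ (Fin (m + 1)) → EReal)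
    (hg : g = fun (x : EuclideanSpace ℝ (Fin (m + 1))) => ((∑ i, |(diffMatrix m).mulVec (WithLp.ofLp x) i| : ℝ) : EReal))
    (z : EuclideanSpace ℝ (Fin (m + 1))) (hz : fenchel g z ≠ ⊤)
    (x₀ : EuclideanSpace ℝ (Fin (m + 1))) (hx₀ : x₀ ∈ esubdiff (fenchel g) z) :
    (Submodule.span ℝ ((fun w => w - x₀) '' esubdiff (fenchel g) z)
        : Set (EuclideanSpace ℝ (Fin (m + 1))))
      = {x : EuclideanSpace ℝ (Fin (m + 1)) |
          ∀ i : Fin m,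
            |∑ j ∈ Finset.univ.filter (fun j : Fin (m + 1) => (j : ℕ) ≤ (i : ℕ)), z j| < 1 →
              x i.castSucc = x i.succ} := by
  obtain rfl : g = fun x => (l1NormMulVec (diffMatrix m) x : EReal) := hg
  have hhom : ∀ t : ℝ, 0 ≤ t → ∀ x, l1NormMulVec (diffMatrix m) (t • x) =
      t * l1NormMulVec (diffMatrix m) x := fun _ ht => l1NormMulVec_smul _ ht
  have hzK := mem_linearMinorants_of_fenchel_ne_top hhom hz
  rw [esubdiff_fenchel_eq_normalCone hhom hzK] at hx₀ ⊢
  exact congrArg SetLike.coe <| Submodule.span_image_sub_eq hx₀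
    (fun a ha b hb => sub_mem_flatSubmodule hzK ha hb)
    (fun x hx => exists_sub_eq_of_mem_flatSubmodule hzK hx)
end
end
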